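/- Let w be an infinite non-ultimately periodic word and u ∈ Π_γ(w). Suppose i ≤ n1 ≤ n2 ≤ j, w[i,j] is a palindrome, CnStdPal_{w,u}(i,j) ≠ ∅, and the interval [n1,n2] is disjoint from the maximal centered standard palindrome of w[i,j]. Then the number of u-runs entirely contained in [n1,n2] is at most 1. -/

import Mathlib

open scoped BigOperators

variable {α : Type*}

/-- The factor of the infinite word `w` (1-indexed) from position `i` to position `j`. -/
def Subword (w : ℕ → α) (i j : ℕ) : List α :=
  (List.range (j + 1 - i)).map fun n => w (i + n)

/-- `t` is a finite factor of the infinite word `w` (positions are 1-indexed). -/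
def IsFactorI (w : ℕ → α) (t : List α) : Prop :=
  ∃ i, 1 ≤ i ∧ t = (List.range t.length).map fun n => w (i + n)

/-- `t` occurs infinitely often in the infinite word `w`. -/
def RecurrentI (w : ℕ → α) (t : List α) : Prop :=
  ∀ N, ∃ i, N ≤ i ∧ t = (List.range t.length).map fun n => w (i + n)

/-- The infinite word `w` is ultimately periodic. -/
def UltimatelyPeriodic (w : ℕ → α) : Prop :=
  ∃ p N, 1 ≤ p ∧ ∀ n, N ≤ n → w (n + p) = w n

/-- The `q`-power `u^q` of a finite word `u`, for a rational exponent `q ≥ 1`: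
`u^⌊q⌋` followed by the prefix of `u` of length `(q - ⌊q⌋)·|u|`. -/
def fracPow (u : List α) (q : ℚ) : List α :=
  (List.replicate ⌊q⌋.toNat u).flatten ++
    u.take (⌊q * (u.length : ℚ)⌋.toNat - ⌊q⌋.toNat * u.length)

/-- A nonempty word is primitive if it is not a (possibly fractional) `q`-power,
`q ≥ 2`, of any word. -/
def Primitive (v : List α) : Prop :=
  v ≠ [] ∧ ∀ (t : List α) (q : ℚ), 2 ≤ q → v ≠ fracPow t q

/-- `PowFactor u`: finite factors of `u^∞` together with finite factors of `(u^R)^∞`. -/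
def IsPowFactor (u t : List α) : Prop :=
  (∃ k, t <:+: (List.replicate k u).flatten) ∨ (∃ k, t <:+: (List.replicate k u.reverse).flatten)

/-- `(i,j)` is a `u`-run of the infinite word `w` (with the fixed parameter `γ`). -/
def IsRun (γ : ℕ) (w : ℕ → α) (u : List α) (i j : ℕ) : Prop :=
  i < j ∧ (γ - 2) * u.length ≤ j - i + 1 ∧ u.length + 1 < i ∧
  IsPowFactor u (Subword w (i - u.length) (j + u.length)) ∧
  ¬ IsPowFactor u (Subword w (i - u.length - 1) (j + u.length)) ∧
  ¬ IsPowFactor u (Subword w (i - u.length) (j + u.length + 1))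

/-- Membership in the set `Π_γ(w)`. -/
def InPi (γ : ℕ) (w : ℕ → α) (u : List α) : Prop :=
  Primitive u ∧ IsFactorI w u ∧
  ¬ IsPowFactor u ((List.range (γ * u.length)).map fun n => w (1 + n)) ∧
  ∃ v : List α, v.length = u.length ∧ IsPowFactor u v ∧
    RecurrentI w ((List.replicate γ v).flatten)

/-- Palindromic length: the minimal number of nonempty palindromes whose
concatenation equals `v`. -/
noncomputable def PL (v : List α) : ℕ :=
  sInf {k | ∃ ps : List (List α), ps.flatten = v ∧ ps.length = k ∧
    ∀ p ∈ ps, p ≠ [] ∧ p.reverse = p}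

/-- `maxPL v`: the maximum of `PL` over the factors of `v`. -/
noncomputable def maxPL (v : List α) : ℕ :=
  sSup {n | ∃ t, t <:+: v ∧ n = PL t}

/-- `(I, J, W, Z, D)` is the run factorization `factrz(w,u)` of `w`:
`(I k, J k)` enumerates the `u`-runs in increasing order, `W k` is the inter-run
factor, and `w[I k, J k] = (Z k)^(D k)`. -/
structure IsFactrz (γ : ℕ) (w : ℕ → α) (u : List α)
    (I J : ℕ → ℕ) (W Z : ℕ → List α) (D : ℕ → ℚ) : Prop where
  run : ∀ k, 1 ≤ k → IsRun γ w u (I k) (J k)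
  mono : ∀ k, 1 ≤ k → I k < I (k + 1)
  complete : ∀ i j, IsRun γ w u i j → ∃ k, 1 ≤ k ∧ I k = i ∧ J k = j
  j0 : J 0 = 0
  wdef : ∀ k, 1 ≤ k → W k = Subword w (J (k - 1) + 1) (I k - 1)
  zlen : ∀ k, 1 ≤ k → (Z k).length = u.length
  zpow : ∀ k, 1 ≤ k → IsPowFactor u (Z k)
  dge : ∀ k, 1 ≤ k → 1 ≤ D k
  zd : ∀ k, 1 ≤ k → Subword w (I k) (J k) = fracPow (Z k) (D k)

/-- Membership in `Φ_h` (with fixed parameter `γ`). -/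
def InPhi (γ h : ℕ) (φ : ℚ → ℚ) : Prop :=
  ∀ q : ℚ, 1 ≤ q → ((γ : ℚ) - 2 ≤ φ q ∧ φ q < (h : ℚ) ∧ ∃ n : ℕ, q - φ q = (n : ℚ))

/-- The finite prefix `W 1 (Z 1)^(E 1) ⋯ W k (Z k)^(E k)` of the reduced word. -/
def redPrefix (W Z : ℕ → List α) (E : ℕ → ℚ) : ℕ → List α
  | 0 => []
  | k + 1 => redPrefix W Z E k ++ W (k + 1) ++ fracPow (Z (k + 1)) (E (k + 1))

/-- `x` is the reduced word `W 1 (Z 1)^(E 1) W 2 (Z 2)^(E 2) ⋯` (1-indexed). -/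
def IsReduce (W Z : ℕ → List α) (E : ℕ → ℚ) (x : ℕ → α) : Prop :=
  ∀ k, redPrefix W Z E k = (List.range (redPrefix W Z E k).length).map fun n => x (1 + n)

/-- Position `i` of `w` is not covered by any `u`-run. -/
def RpoDom (γ : ℕ) (w : ℕ → α) (u : List α) (i : ℕ) : Prop :=
  1 ≤ i ∧ ∀ a b, IsRun γ w u a b → ¬ (a ≤ i ∧ i ≤ b)

/-- `κ(j) = Σ_{i ≤ j} (|W i| + |(Z i)^(D i)|)`, the end position of the `j`-th run. -/
def kappa (W Z : ℕ → List α) (D : ℕ → ℚ) (j : ℕ) : ℕ :=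
  ∑ i ∈ Finset.Icc 1 j, ((W i).length + (fracPow (Z i) (D i)).length)

/-- The graph of the position bijection `rpo`: position `i` of `w` (with exponent
sequence `D`) corresponds to position `ib` of the reduced word (exponents `E`). -/
def RpoRel (W Z : ℕ → List α) (D E : ℕ → ℚ) (i ib : ℕ) : Prop :=
  ∃ j, kappa W Z D j < i ∧ i ≤ kappa W Z D (j + 1) ∧
    ib = kappa W Z E j + (i - kappa W Z D j)

/-- There are at most `N` `u`-runs entirely contained in `[a,b]`. -/
def RunCountLe (γ : ℕ) (w : ℕ → α) (u : List α) (a b N : ℕ) : Prop :=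
  ∀ S : Finset (ℕ × ℕ), (∀ p ∈ S, IsRun γ w u p.1 p.2 ∧ a ≤ p.1 ∧ p.2 ≤ b) → S.card ≤ N

/-- `(i,j)` is a standard palindrome of `w` with respect to `u`. -/
def IsStdPal (γ : ℕ) (w : ℕ → α) (u : List α) (i j : ℕ) : Prop :=
  i ≤ j ∧ RpoDom γ w u i ∧ RpoDom γ w u j ∧
  (Subword w (i - 1) (j + 1)).reverse = Subword w (i - 1) (j + 1) ∧
  (∀ m, i - 1 ≤ m → m ≤ min (i + u.length - 1) j → RpoDom γ w u m) ∧
  (∀ m, max (j + 1 - u.length) i ≤ m → m ≤ j + 1 → RpoDom γ w u m) ∧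
  (∀ m, i ≤ m → m ≤ j → (RpoDom γ w u m ↔ RpoDom γ w u (i + j - m)))

/-- `(m1,m2)` is a centered standard palindrome of `w[i,j]`. -/
def IsCnStdPal (γ : ℕ) (w : ℕ → α) (u : List α) (i j m1 m2 : ℕ) : Prop :=
  IsStdPal γ w u m1 m2 ∧ i ≤ m1 ∧ m2 ≤ j ∧ m1 - i = j - m2

/-! Suppose two runs lie in `[n1,n2]`, say to the right of `b`. The leftmost run `(p₁,q₁)` to the
right of `b` is followed by another run beyond its right margin, so its extended window lies in
`w[i,j]` and its mirror image is again a run. The positions of `(b, q₁ + |u| + 1]` outside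
`(p₁,q₁)` are run-free, and, by the palindromic symmetry, so are their mirror images. Hence the
standard palindrome `(a,b)` extends to the centered standard palindrome
`(i + j - q₁ - |u|, q₁ + |u|)`, contradicting its maximality. Runs to the left of `a` are handled
in the same way with the rightmost such run. -/

section Subword

theorem length_subword (w : ℕ → α) (x y : ℕ) : (Subword w x y).length = y + 1 - x := by
  simp [Subword]

theorem getElem_subword (w : ℕ → α) (x y n : ℕ) (h : n < (Subword w x y).length) :
    (Subword w x y)[n] = w (x + n) := by
  simp [Subword]

theorem range_map_add_infix {β : Type*} (f : ℕ → β) {a b c : ℕ} (h : a + b ≤ c) :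
    ((List.range b).map fun n => f (a + n)) <:+: (List.range c).map f := by
  obtain ⟨r, rfl⟩ : ∃ r, c = a + (b + r) := ⟨c - (a + b), by omega⟩
  refine ⟨(List.range a).map f, (List.range r).map fun n => f (a + b + n), ?_⟩
  simp only [List.range_add, List.map_append, List.map_map, List.append_assoc]
  congr 2
  exact List.map_congr_left fun n _ => congrArg f (by simp only [Function.comp_apply]; omega)

theorem subword_infix_subword (w : ℕ → α) {x y x' y' : ℕ} (hx : x ≤ x') (hy : y' ≤ y)
    (hxy : x' ≤ y' + 1) : Subword w x' y' <:+: Subword w x y := by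
  have h : Subword w x' y' = (List.range (y' + 1 - x')).map fun n => w (x + (x' - x + n)) :=
    List.map_congr_left fun n _ => congrArg w (by omega)
  rw [h]
  exact range_map_add_infix (fun m => w (x + m)) (by omega)

theorem reverse_subword_of_palindrome {w : ℕ → α} {i j x y : ℕ}
    (hpal : (Subword w i j).reverse = Subword w i j)
    (hix : i ≤ x) (hxy : x ≤ y) (hyj : y ≤ j) :
    (Subword w x y).reverse = Subword w (i + j - y) (i + j - x) := by
  have hmirror : ∀ m, i ≤ m → m ≤ j → w m = w (i + j - m) := by
    intro m h1 h2
    have hlen : j - m < (Subword w i j).reverse.length := by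
      rw [List.length_reverse, length_subword]; omega
    have := List.getElem_of_eq hpal hlen
    simp only [List.getElem_reverse, getElem_subword, length_subword] at this
    rwa [show i + (j + 1 - i - 1 - (j - m)) = m by omega,
      show i + (j - m) = i + j - m by omega] at this
  apply List.ext_getElem
  · simp only [List.length_reverse, length_subword]; omega
  · intro n h1 h2
    simp only [List.length_reverse, length_subword] at h1
    simp only [List.getElem_reverse, getElem_subword, length_subword]
    rw [hmirror _ (by omega) (by omega)]
    congr 1
    omega

end Subword

section PowFactor

variable {u t s : List α}

theorem IsPowFactor.of_infix (h : IsPowFactor u t) (hs : s <:+: t) : IsPowFactor u s := by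
  rcases h with ⟨k, hk⟩ | ⟨k, hk⟩
  exacts [Or.inl ⟨k, hs.trans hk⟩, Or.inr ⟨k, hs.trans hk⟩]

theorem reverse_flatten_replicate (k : ℕ) (v : List α) :
    (List.replicate k v).flatten.reverse = (List.replicate k v.reverse).flatten := by
  simp [List.reverse_flatten, List.map_replicate, List.reverse_replicate]

theorem IsPowFactor.reverse (h : IsPowFactor u t) : IsPowFactor u t.reverse := by
  rcases h with ⟨k, hk⟩ | ⟨k, hk⟩
  · exact Or.inr ⟨k, reverse_flatten_replicate k u ▸ List.reverse_infix.mpr hk⟩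
  · refine Or.inl ⟨k, ?_⟩
    simpa [reverse_flatten_replicate] using List.reverse_infix.mpr hk

theorem IsPowFactor.mirror {w : ℕ → α} {i j x y : ℕ}
    (hpal : (Subword w i j).reverse = Subword w i j) (hix : i ≤ x) (hxy : x ≤ y) (hyj : y ≤ j)
    (h : IsPowFactor u (Subword w x y)) :
    IsPowFactor u (Subword w (i + j - y) (i + j - x)) :=
  reverse_subword_of_palindrome hpal hix hxy hyj ▸ h.reverse

theorem isPowFactor_mirror_iff {w : ℕ → α} {i j x y : ℕ}
    (hpal : (Subword w i j).reverse = Subword w i j)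
    (hix : i ≤ x) (hxy : x ≤ y) (hyj : y ≤ j) :
    IsPowFactor u (Subword w (i + j - y) (i + j - x)) ↔ IsPowFactor u (Subword w x y) := by
  refine ⟨fun h => ?_, (·.mirror hpal hix hxy hyj)⟩
  have := h.mirror hpal (by omega) (by omega) (by omega)
  rwa [show i + j - (i + j - x) = x by omega, show i + j - (i + j - y) = y by omega] at this

theorem IsPowFactor.ne_nil (h : IsPowFactor u t) (ht : t ≠ []) : u ≠ [] := by
  rintro rfl
  rcases h with ⟨k, hk⟩ | ⟨k, hk⟩ <;> simp_all

end PowFactor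

section Cyclic

/-- `v v v ⋯`, read from position `0`; `d` is a junk value for `v = []`. -/
def cyclicWord (v : List α) (d : α) (n : ℕ) : α :=
  v.getD (n % v.length) d

theorem periodic_cyclicWord (v : List α) (d : α) : Function.Periodic (cyclicWord v d) v.length :=
  fun n => by simp [cyclicWord]

theorem flatten_replicate_eq_map_cyclicWord (v : List α) (d : α) (k : ℕ) :
    (List.replicate k v).flatten = (List.range (k * v.length)).map (cyclicWord v d) := by
  induction k with
  | zero => simp
  | succ k ih =>
    rw [List.replicate_succ, List.flatten_cons, ih, Nat.succ_mul, Nat.add_comm,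
      List.range_add, List.map_append, List.map_map]
    congr 1
    · refine List.ext_getElem (by simp) fun m h _ => ?_
      simp only [List.getElem_map, List.getElem_range] at h ⊢
      simp [cyclicWord, Nat.mod_eq_of_lt h, h]
    · refine List.map_congr_left fun m _ => ?_
      simp only [Function.comp_apply, Nat.add_comm v.length, periodic_cyclicWord v d m]

theorem exists_cyclicWord_of_infix {v t : List α} {k : ℕ} (d : α)
    (h : t <:+: (List.replicate k v).flatten) :
    ∃ φ, ∀ n (hn : n < t.length), t[n] = cyclicWord v d (φ + n) := by
  obtain ⟨s, s', hst⟩ := h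
  refine ⟨s.length, fun n hn => ?_⟩
  rw [flatten_replicate_eq_map_cyclicWord v d] at hst
  have hlen : s.length + n < (s ++ t ++ s').length := by
    simp only [List.length_append]; omega
  have := List.getElem_of_eq hst hlen
  rw [List.getElem_append_left (by simp only [List.length_append]; omega),
    List.getElem_append_right (by omega)] at this
  simpa using this

theorem infix_of_eq_map_cyclicWord {v : List α} (d : α) (hv : v ≠ []) (φ L : ℕ) :
    ((List.range L).map fun n => cyclicWord v d (φ + n)) <:+:
      (List.replicate (φ + L) v).flatten := by
  rw [flatten_replicate_eq_map_cyclicWord v d]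
  apply range_map_add_infix
  exact Nat.le_mul_of_pos_right _ (List.length_pos_iff.mpr hv)

theorem Function.Periodic.eq_of_eqOn_lt {β : Type*} {f g : ℕ → β} {c : ℕ}
    (hf : Function.Periodic f c) (hg : Function.Periodic g c) (hc : 0 < c)
    (h : ∀ n < c, f n = g n) (n : ℕ) : f n = g n := by
  rw [← hf.map_mod_nat, ← hg.map_mod_nat]
  exact h _ (Nat.mod_lt n hc)

end Cyclic

section PowFactorSubword

variable {w : ℕ → α} {u : List α}

theorem IsPowFactor.exists_cyclicWord (d : α) {s t : ℕ} (h : IsPowFactor u (Subword w s t)) :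
    ∃ v, (v = u ∨ v = u.reverse) ∧
      ∃ φ, ∀ n < t + 1 - s, w (s + n) = cyclicWord v d (φ + n) := by
  have key : ∀ {v : List α} {k : ℕ}, Subword w s t <:+: (List.replicate k v).flatten →
      ∃ φ, ∀ n < t + 1 - s, w (s + n) = cyclicWord v d (φ + n) := fun hk => by
    obtain ⟨φ, hφ⟩ := exists_cyclicWord_of_infix d hk
    exact ⟨φ, fun n hn => by
      rw [← hφ n (by rw [length_subword]; exact hn), getElem_subword]⟩
  rcases h with ⟨k, hk⟩ | ⟨k, hk⟩
  exacts [⟨u, Or.inl rfl, key hk⟩, ⟨u.reverse, Or.inr rfl, key hk⟩]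

theorem isPowFactor_of_cyclicWord {v : List α} (d : α) (hv : v = u ∨ v = u.reverse)
    (hne : v ≠ []) {s t φ : ℕ} (h : ∀ n < t + 1 - s, w (s + n) = cyclicWord v d (φ + n)) :
    IsPowFactor u (Subword w s t) := by
  have he : Subword w s t = (List.range (t + 1 - s)).map fun n => cyclicWord v d (φ + n) :=
    List.map_congr_left fun n hn => h n (List.mem_range.mp hn)
  rw [he]
  rcases hv with rfl | rfl
  exacts [Or.inl ⟨_, infix_of_eq_map_cyclicWord d hne φ _⟩,
    Or.inr ⟨_, infix_of_eq_map_cyclicWord d hne φ _⟩]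

/-- Both factors follow a cyclic word of period `|u|`; agreeing on `|u|` consecutive positions,
the two cyclic words agree everywhere. -/
theorem IsPowFactor.merge (hu : u ≠ []) {s₁ t₁ s₂ t₂ : ℕ}
    (h₁ : IsPowFactor u (Subword w s₁ t₁)) (h₂ : IsPowFactor u (Subword w s₂ t₂))
    (hs : s₁ ≤ s₂) (hov : s₂ + u.length ≤ t₁ + 1) (ht : t₁ ≤ t₂) :
    IsPowFactor u (Subword w s₁ t₂) := by
  let d := u.head hu
  obtain ⟨v₁, hv₁, φ₁, h₁⟩ := h₁.exists_cyclicWord d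
  obtain ⟨v₂, hv₂, φ₂, h₂⟩ := h₂.exists_cyclicWord d
  have hlen₁ : v₁.length = u.length := by rcases hv₁ with rfl | rfl <;> simp
  have hlen₂ : v₂.length = u.length := by rcases hv₂ with rfl | rfl <;> simp
  have hpos : 0 < u.length := List.length_pos_iff.mpr hu
  have hagree :
      ∀ n, cyclicWord v₂ d (φ₂ + n) = cyclicWord v₁ d (φ₁ + (s₂ - s₁) + n) := by
    refine Function.Periodic.eq_of_eqOn_lt (c := u.length) ?_ ?_ hpos fun n hn => ?_
    · exact hlen₂ ▸ (periodic_cyclicWord v₂ d).const_add φ₂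
    · exact hlen₁ ▸ (periodic_cyclicWord v₁ d).const_add _
    · rw [← h₂ n (by omega), Nat.add_assoc, ← h₁ _ (by omega)]
      congr 1
      omega
  refine isPowFactor_of_cyclicWord d hv₁ (φ := φ₁)
    (by simp [← List.length_pos_iff, hlen₁, hpos]) fun n hn => ?_
  by_cases hn₁ : n < t₁ + 1 - s₁
  · exact h₁ n hn₁
  · rw [show s₁ + n = s₂ + (n - (s₂ - s₁)) by omega, h₂ _ (by omega), hagree]
    congr 1
    omega

end PowFactorSubword

section Runs

variable {γ : ℕ} {w : ℕ → α} {u : List α} {p q p' q' : ℕ}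

theorem IsRun.ne_nil (h : IsRun γ w u p q) : u ≠ [] :=
  h.2.2.2.1.ne_nil (by
    have := h.1
    rw [ne_eq, ← List.length_eq_zero_iff, length_subword]
    omega)

/-- Merged with the run's window, such a power factor would extend the run to the right. -/
theorem IsRun.not_isPowFactor_right (h : IsRun γ w u p q) {s t : ℕ} (hs : s ≤ q + 1)
    (ht : q + u.length + 1 ≤ t) : ¬ IsPowFactor u (Subword w s t) := by
  intro hst
  have hu := h.ne_nil
  obtain ⟨hpq, -, -, hwin, -, hmax⟩ := h
  by_cases hsp : s ≤ p - u.length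
  · exact hmax (hst.of_infix (subword_infix_subword w hsp ht (by omega)))
  · have := hwin.merge hu hst (by omega) (by omega) (by omega)
    exact hmax (this.of_infix (subword_infix_subword w le_rfl ht (by omega)))

theorem IsRun.not_isPowFactor_left (h : IsRun γ w u p q) {s t : ℕ} (hs : s ≤ p - u.length - 1)
    (ht : p - 1 ≤ t) : ¬ IsPowFactor u (Subword w s t) := by
  intro hst
  have hu := h.ne_nil
  obtain ⟨hpq, -, hp, hwin, hmax, -⟩ := h
  by_cases hqt : q + u.length ≤ t
  · exact hmax (hst.of_infix (subword_infix_subword w hs hqt (by omega)))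
  · have := hst.merge hu hwin (by omega) (by omega) (by omega)
    exact hmax (this.of_infix (subword_infix_subword w hs le_rfl (by omega)))

theorem IsRun.separated_of_le (h : IsRun γ w u p q) (h' : IsRun γ w u p' q') (hp : p ≤ p')
    (hne : (p, q) ≠ (p', q')) : q + u.length + 2 ≤ p' := by
  by_contra hsep
  have hp' := h'.2.2.1
  have hq' := h'.1
  rcases Nat.lt_or_ge q q' with hqq | hqq
  · exact h.not_isPowFactor_right (by omega) (by omega) h'.2.2.2.1
  · rcases Nat.lt_or_ge p p' with hpp | hpp
    · exact h'.not_isPowFactor_left (by omega) (by omega) h.2.2.2.1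
    · have hqq' : q' < q := lt_of_le_of_ne hqq fun h => hne (Prod.ext (by omega) h.symm)
      exact h'.not_isPowFactor_right (by omega) (by omega) h.2.2.2.1

theorem IsRun.eq_or_separated (h : IsRun γ w u p q) (h' : IsRun γ w u p' q') :
    (p = p' ∧ q = q') ∨ q + u.length + 2 ≤ p' ∨ q' + u.length + 2 ≤ p := by
  by_cases hne : (p, q) = (p', q')
  · exact Or.inl (Prod.mk.inj hne)
  rcases le_total p p' with hp | hp
  · exact Or.inr (Or.inl (h.separated_of_le h' hp hne))
  · exact Or.inr (Or.inr (h'.separated_of_le h hp (Ne.symm hne)))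

theorem IsRun.rpoDom_of_right_margin (h : IsRun γ w u p q) {m : ℕ} (hm : q < m)
    (hm' : m ≤ q + u.length + 1) : RpoDom γ w u m := by
  have := h.1
  refine ⟨by omega, fun c e hce hcov => ?_⟩
  have := hce.1
  rcases h.eq_or_separated hce with _ | _ | _ <;> omega

theorem IsRun.rpoDom_of_left_margin (h : IsRun γ w u p q) {m : ℕ} (hm : p - u.length - 1 ≤ m)
    (hm' : m < p) : RpoDom γ w u m := by
  have := h.1
  have := h.2.2.1
  refine ⟨by omega, fun c e hce hcov => ?_⟩
  have := hce.1
  rcases h.eq_or_separated hce with _ | _ | _ <;> omega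

theorem IsRun.reflect {i j : ℕ} (hpal : (Subword w i j).reverse = Subword w i j)
    (h : IsRun γ w u p q) (hi : i + u.length + 1 ≤ p) (hj : q + u.length + 1 ≤ j)
    (hpos : u.length + 1 < i + j - q) : IsRun γ w u (i + j - q) (i + j - p) := by
  obtain ⟨hpq, hlen, -, hwin, hleft, hright⟩ := h
  have key := fun x y (hix : i ≤ x) (hxy : x ≤ y) (hyj : y ≤ j) =>
    isPowFactor_mirror_iff (u := u) hpal hix hxy hyj
  refine ⟨by omega, by rwa [show i + j - p - (i + j - q) = q - p by omega], hpos, ?_, ?_, ?_⟩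
  · rwa [show i + j - q - u.length = i + j - (q + u.length) by omega,
      show i + j - p + u.length = i + j - (p - u.length) by omega, key _ _ (by omega) (by omega)
      (by omega)]
  · rwa [show i + j - q - u.length - 1 = i + j - (q + u.length + 1) by omega,
      show i + j - p + u.length = i + j - (p - u.length) by omega, key _ _ (by omega) (by omega)
      (by omega)]
  · rwa [show i + j - q - u.length = i + j - (q + u.length) by omega,
      show i + j - p + u.length + 1 = i + j - (p - u.length - 1) by omega,
      key _ _ (by omega) (by omega) (by omega)]

end Runs

section StdPal

variable {γ : ℕ} {w : ℕ → α} {u : List α} {i j a b p q : ℕ}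

theorem IsStdPal.rpoDom_pred (h : IsStdPal γ w u a b) : RpoDom γ w u (a - 1) :=
  h.2.2.2.2.1 (a - 1) le_rfl (le_min (by omega) (by have := h.1; omega))

theorem IsStdPal.rpoDom_succ (h : IsStdPal γ w u a b) : RpoDom γ w u (b + 1) :=
  h.2.2.2.2.2.1 (b + 1) (max_le (by omega) (by have := h.1; omega)) le_rfl

theorem IsCnStdPal.add_eq (h : IsCnStdPal γ w u i j a b) : a + b = i + j := by
  obtain ⟨⟨hab, -⟩, hia, hbj, hcen⟩ := h
  omega

theorem IsCnStdPal.extend (hpal : (Subword w i j).reverse = Subword w i j)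
    (hab : IsCnStdPal γ w u i j a b) (hR : IsRun γ w u p q) (hqa : q < a)
    (hip : i + u.length + 1 ≤ p)
    (hdom : ∀ m, p - u.length - 1 ≤ m → m < a → (m < p ∨ q < m) →
      RpoDom γ w u m ∧ RpoDom γ w u (i + j - m)) :
    IsCnStdPal γ w u i j (p - u.length) (i + j - (p - u.length)) := by
  obtain ⟨⟨hab, -, -, -, -, -, hsym⟩, hia, hbj, hcen⟩ := hab
  have hpq := hR.1
  have hℓ : 0 < u.length := List.length_pos_iff.mpr hR.ne_nil
  have hM := hR.reflect hpal hip (by omega) (by omega)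
  have hsymL : ∀ m, p - u.length ≤ m → m < a →
      (RpoDom γ w u m ↔ RpoDom γ w u (i + j - m)) := by
    intro m hm hma
    by_cases hmR : p ≤ m ∧ m ≤ q
    · exact iff_of_false (fun hd => hd.2 p q hR hmR)
        (fun hd => hd.2 _ _ hM ⟨by omega, by omega⟩)
    · have := hdom m (by omega) hma (by omega)
      exact iff_of_true this.1 this.2
  refine ⟨⟨by omega, (hdom _ (by omega) (by omega) (by omega)).1, ?_, ?_, ?_, ?_, ?_⟩,
    by omega, by omega, by omega⟩
  · exact (hdom _ (by omega) (by omega) (by omega)).2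
  · rw [show i + j - (p - u.length) + 1 = i + j - (p - u.length - 1) by omega]
    have := reverse_subword_of_palindrome hpal (x := p - u.length - 1)
      (y := i + j - (p - u.length - 1)) (by omega) (by omega) (by omega)
    rwa [show i + j - (i + j - (p - u.length - 1)) = p - u.length - 1 by omega] at this
  · intro m hm hm'
    exact (hdom m hm (by omega) (Or.inl (by omega))).1
  · intro m hm hm'
    have := (hdom (i + j - m) (by omega) (by omega) (Or.inl (by omega))).2
    rwa [show i + j - (i + j - m) = m by omega] at this
  · intro m hm hm'
    rw [show p - u.length + (i + j - (p - u.length)) - m = i + j - m by omega]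
    rcases Nat.lt_or_ge m a with hma | hma
    · exact hsymL m hm hma
    rcases le_or_gt m b with hmb | hmb
    · rw [show i + j - m = a + b - m by omega]
      exact hsym m hma hmb
    · have := hsymL (i + j - m) (by omega) (by omega)
      rw [show i + j - (i + j - m) = m by omega] at this
      exact this.symm

end StdPal

section RunFree

variable {γ : ℕ} {w : ℕ → α} {u : List α} {i j a b p q : ℕ}

/-- A run covering `i + j - x` is either mirrored onto `x`, or it leaves `w[i,j]` on the left,
and then the mirror image of its window prolongs the run `(p,q)` to the right. -/
theorem rpoDom_mirror_of_run_right (hpal : (Subword w i j).reverse = Subword w i j)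
    (hsum : a + b = i + j) (hab : a ≤ b) (ha : RpoDom γ w u (a - 1))
    (hR : IsRun γ w u p q) (hbp : b < p) (hqj : q + u.length + 1 < j)
    {x : ℕ} (hbx : b < x) (hxq : x ≤ q + u.length + 1) (hx : RpoDom γ w u x) :
    RpoDom γ w u (i + j - x) := by
  have hpq := hR.1
  refine ⟨by omega, fun c e hce hcov => ?_⟩
  have hce_lt := hce.1
  have hea : e + 2 ≤ a := by
    by_contra
    exact ha.2 c e hce ⟨by omega, by omega⟩
  rcases Nat.lt_or_ge (i + u.length) c with hc | hc
  · exact hx.2 _ _ (hce.reflect hpal (by omega) (by omega) (by omega)) ⟨by omega, by omega⟩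
  · have hwin : IsPowFactor u (Subword w i (e + u.length)) :=
      hce.2.2.2.1.of_infix (subword_infix_subword w (by omega) le_rfl (by omega))
    have hmir := hwin.mirror hpal le_rfl (by omega) (by omega)
    rw [show i + j - i = j by omega] at hmir
    exact hR.not_isPowFactor_right (by omega) (by omega) hmir

/-- As in `rpoDom_mirror_of_run_right`, with sides exchanged; here a run may also fail to be
mirrored because its mirror image would start at position `|u| + 1` (possible when `i = 0`),
and then too the mirror image of its window prolongs `(p,q)` to the left. -/
theorem rpoDom_mirror_of_run_left (hpal : (Subword w i j).reverse = Subword w i j)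
    (hsum : a + b = i + j) (hab : a ≤ b) (hb : RpoDom γ w u (b + 1))
    (hR : IsRun γ w u p q) (hqa : q < a) (hip : i + u.length + 1 ≤ p)
    {x : ℕ} (hpx : p - u.length - 1 ≤ x) (hxa : x < a) (hx : RpoDom γ w u x) :
    RpoDom γ w u (i + j - x) := by
  have hpq := hR.1
  refine ⟨by omega, fun c e hce hcov => ?_⟩
  have hce_lt := hce.1
  have hbc : b + 2 ≤ c := by
    by_contra
    exact hb.2 c e hce ⟨by omega, by omega⟩
  by_cases hin : e + u.length + 1 ≤ j ∧ u.length + 1 < i + j - e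
  · exact hx.2 _ _ (hce.reflect hpal (by omega) hin.1 hin.2) ⟨by omega, by omega⟩
  · have hwin : IsPowFactor u (Subword w (c - u.length) (min (e + u.length) j)) :=
      hce.2.2.2.1.of_infix (subword_infix_subword w le_rfl (min_le_left _ _) (by omega))
    have hmir := hwin.mirror hpal (by omega) (by omega) (min_le_right _ _)
    have hp := hR.2.2.1
    exact hR.not_isPowFactor_left (by omega) (by omega) hmir

theorem rpoDom_of_lt_leftmost_run (hb : RpoDom γ w u (b + 1)) (hR : IsRun γ w u p q)
    (hqj : q ≤ j) (hmin : ∀ c e, IsRun γ w u c e → b < c → e ≤ j → p ≤ c)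
    {x : ℕ} (hbx : b < x) (hxp : x < p) : RpoDom γ w u x := by
  have hpq := hR.1
  refine ⟨by omega, fun c e hce hcov => ?_⟩
  have hce_lt := hce.1
  have hbc : b + 1 < c := by
    by_contra
    exact hb.2 c e hce ⟨by omega, by omega⟩
  rcases hce.eq_or_separated hR with _ | _ | _
  · omega
  · have := hmin c e hce (by omega) (by omega)
    omega
  · omega

theorem rpoDom_of_gt_rightmost_run (ha : RpoDom γ w u (a - 1)) (hR : IsRun γ w u p q)
    (hip : i ≤ p) (hmax : ∀ c e, IsRun γ w u c e → i ≤ c → e < a → c ≤ p)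
    {x : ℕ} (hqx : q < x) (hxa : x < a) : RpoDom γ w u x := by
  have hpq := hR.1
  refine ⟨by omega, fun c e hce hcov => ?_⟩
  have hce_lt := hce.1
  have hea : e + 2 ≤ a := by
    by_contra
    exact ha.2 c e hce ⟨by omega, by omega⟩
  rcases hR.eq_or_separated hce with _ | _ | _
  · omega
  · have := hmax c e hce (by omega) (by omega)
    omega
  · omega

end RunFree

section TwoRuns

variable {γ : ℕ} {w : ℕ → α} {u : List α} {i j a b p q p' q' : ℕ}

theorem exists_longer_cnStdPal_of_runs_right (hpal : (Subword w i j).reverse = Subword w i j)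
    (hab : IsCnStdPal γ w u i j a b) (hr : IsRun γ w u p q) (hr' : IsRun γ w u p' q')
    (hbp : b < p) (hbp' : b < p') (hqj : q ≤ j) (hq'j : q' ≤ j) (hne : (p, q) ≠ (p', q')) :
    ∃ c d, IsCnStdPal γ w u i j c d ∧ b - a < d - c := by
  classical
  have hex : ∃ c, ∃ e, IsRun γ w u c e ∧ b < c ∧ e ≤ j := ⟨p, q, hr, hbp, hqj⟩
  obtain ⟨q₁, hR₁, hbp₁, hq₁j⟩ := Nat.find_spec hex
  set p₁ := Nat.find hex
  have hmin : ∀ c e, IsRun γ w u c e → b < c → e ≤ j → p₁ ≤ c :=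
    fun c e h hc he => Nat.find_min' hex ⟨e, h, hc, he⟩
  obtain ⟨c, e, hce, hbc, hej, hne₁⟩ :
      ∃ c e, IsRun γ w u c e ∧ b < c ∧ e ≤ j ∧ (p₁, q₁) ≠ (c, e) := by
    by_cases h : (p₁, q₁) = (p, q)
    · exact ⟨p', q', hr', hbp', hq'j, h ▸ hne⟩
    · exact ⟨p, q, hr, hbp, hqj, h⟩
  have hroom : q₁ + u.length + 1 < j := by
    have := hR₁.separated_of_le hce (hmin c e hce hbc hej) hne₁
    have := hce.1
    omega
  have hpq₁ := hR₁.1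
  have hsum := hab.add_eq
  have hle := hab.1.1
  have hrun := hR₁.reflect hpal (by omega) (by omega) (by omega)
  refine ⟨_, _, hab.extend hpal hrun (by omega) (by omega) fun m hm hma hmR => ?_, by omega⟩
  have hx : RpoDom γ w u (i + j - m) := by
    rcases hmR with hm' | hm'
    · exact hR₁.rpoDom_of_right_margin (by omega) (by omega)
    · exact rpoDom_of_lt_leftmost_run hab.1.rpoDom_succ hR₁ hq₁j hmin (by omega) (by omega)
  refine ⟨?_, hx⟩
  have := rpoDom_mirror_of_run_right hpal hsum hle hab.1.rpoDom_pred hR₁ hbp₁ hroom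
    (by omega) (by omega) hx
  rwa [show i + j - (i + j - m) = m by omega] at this

theorem exists_longer_cnStdPal_of_runs_left (hpal : (Subword w i j).reverse = Subword w i j)
    (hab : IsCnStdPal γ w u i j a b) (hr : IsRun γ w u p q) (hr' : IsRun γ w u p' q')
    (hqa : q < a) (hq'a : q' < a) (hip : i ≤ p) (hip' : i ≤ p') (hne : (p, q) ≠ (p', q')) :
    ∃ c d, IsCnStdPal γ w u i j c d ∧ b - a < d - c := by
  classical
  let P c := ∃ e, IsRun γ w u c e ∧ i ≤ c ∧ e < a
  have hbound : ∀ c e, IsRun γ w u c e → e < a → c ≤ a := fun c e h he => by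
    have := h.1
    omega
  obtain ⟨q₁, hR₁, hip₁, hq₁a⟩ : P (Nat.findGreatest P a) :=
    Nat.findGreatest_spec (hbound p q hr hqa) ⟨q, hr, hip, hqa⟩
  set p₁ := Nat.findGreatest P a
  have hmax : ∀ c e, IsRun γ w u c e → i ≤ c → e < a → c ≤ p₁ :=
    fun c e h hc he => Nat.le_findGreatest (hbound c e h he) ⟨e, h, hc, he⟩
  obtain ⟨c, e, hce, hic, hea, hne₁⟩ :
      ∃ c e, IsRun γ w u c e ∧ i ≤ c ∧ e < a ∧ (c, e) ≠ (p₁, q₁) := by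
    by_cases h : (p, q) = (p₁, q₁)
    · exact ⟨p', q', hr', hip', hq'a, h ▸ hne.symm⟩
    · exact ⟨p, q, hr, hip, hqa, h⟩
  have hroom : i + u.length + 1 ≤ p₁ := by
    have := hce.separated_of_le hR₁ (hmax c e hce hic hea) hne₁
    have := hce.1
    omega
  have hpq₁ := hR₁.1
  have hsum := hab.add_eq
  have hle := hab.1.1
  refine ⟨_, _, hab.extend hpal hR₁ hq₁a hroom fun m hm hma hmR => ?_, by omega⟩
  have hx : RpoDom γ w u m := by
    rcases hmR with hm' | hm'
    · exact hR₁.rpoDom_of_left_margin hm hm'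
    · exact rpoDom_of_gt_rightmost_run hab.1.rpoDom_pred hR₁ hip₁ hmax hm' hma
  exact ⟨hx, rpoDom_mirror_of_run_left hpal hsum hle hab.1.rpoDom_succ hR₁ hq₁a hroom
    hm hma hx⟩

end TwoRuns

theorem outside_maxCSP_run_bound_general {α : Type*} (γ : ℕ)
    (w : ℕ → α) (u : List α)
    (i j n1 n2 a b : ℕ) (h1 : i ≤ n1) (h3 : n2 ≤ j)
    (hpal : (Subword w i j).reverse = Subword w i j)
    (hcsp : IsCnStdPal γ w u i j a b)
    (hmax : ∀ c d, IsCnStdPal γ w u i j c d → d - c ≤ b - a)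
    (hdisj : ¬ (n1 ≤ a ∧ a ≤ n2) ∧ ¬ (a ≤ n1 ∧ n1 ≤ b)) :
    RunCountLe γ w u n1 n2 1 := by
  intro S hS
  by_contra! hcard
  obtain ⟨⟨p, q⟩, hP, ⟨p', q'⟩, hP', hne⟩ := Finset.one_lt_card.mp hcard
  obtain ⟨hr, hn1p, hqn2⟩ := hS _ hP
  obtain ⟨hr', hn1p', hq'n2⟩ := hS _ hP'
  obtain ⟨c, d, hcd, hlong⟩ : ∃ c d, IsCnStdPal γ w u i j c d ∧ b - a < d - c := by
    by_cases hbn1 : b < n1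
    · exact exists_longer_cnStdPal_of_runs_right hpal hcsp hr hr'
        (by omega) (by omega) (by omega) (by omega) hne
    · exact exists_longer_cnStdPal_of_runs_left hpal hcsp hr hr'
        (by omega) (by omega) (by omega) (by omega) hne
  exact absurd (hmax c d hcd) (by omega)

/-- an interval disjoint from the maximal centered standard palindrome
of a palindrome contains at most one run. -/
theorem outside_maxCSP_run_bound {α : Type*} (γ : ℕ) (hγ : 3 ≤ γ)
    (w : ℕ → α) (u : List α) (hw : ¬ UltimatelyPeriodic w) (hu : InPi γ w u)
    (i j n1 n2 a b : ℕ) (h1 : i ≤ n1) (h2 : n1 ≤ n2) (h3 : n2 ≤ j)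
    (hpal : (Subword w i j).reverse = Subword w i j)
    (hcsp : IsCnStdPal γ w u i j a b)
    (hmax : ∀ c d, IsCnStdPal γ w u i j c d → d - c ≤ b - a)
    (hdisj : ¬ (n1 ≤ a ∧ a ≤ n2) ∧ ¬ (a ≤ n1 ∧ n1 ≤ b)) :
    RunCountLe γ w u n1 n2 1 :=
  outside_maxCSP_run_bound_general γ w u i j n1 n2 a b h1 h3 hpal hcsp hmax hdisj
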